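/- arXiv:1510.05132 — 3 statements merged into one kernel-verified Lean document; each statement's English description precedes it below -/
import Mathlib

section
/- For f ∈ C_c^∞(D) (compactly supported in the open unit disk), the transform I_⊥f(β,α) = ∫₀^{2cos α} (X_⊥f)(e^{iβ} + t e^{i(β+π+α)}) dt, where X_⊥ = sin(β+π+α)∂ₓ − cos(β+π+α)∂ᵧ evaluated along the line, satisfies ∫_{−π/2}^{π/2} I_⊥f(β,α) dα = 0 for every β ∈ S¹. -/
open Real Complex intervalIntegral MeasureTheory

lemma hpiC : Complex.exp (Complex.I*(π:ℂ)) = -1 := by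
  rw [mul_comm]; exact Complex.exp_pi_mul_I

lemma hcosM (x : ℝ) : ((Real.cos x : ℝ) : ℂ) * 2 = Complex.exp (I*x) + Complex.exp (-(I*x)) := by
  rw [Complex.ofReal_cos, Complex.cos, mul_comm]; ring_nf

lemma hsinM (x : ℝ) : ((Real.sin x : ℝ) : ℂ) * (2*I) = Complex.exp (I*x) - Complex.exp (-(I*x)) := by
  rw [Complex.ofReal_sin, Complex.sin, show ((x:ℂ)*I) = I*(x:ℂ) from mul_comm _ _,
      show ((-(x:ℂ))*I) = -(I*(x:ℂ)) by ring]
  linear_combination (Complex.exp (-(I*(x:ℂ))) - Complex.exp (I*(x:ℂ))) * Complex.I_sq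

lemma hEuler (x : ℝ) : Complex.exp (I*x) = ((Real.cos x :ℝ):ℂ) + ((Real.sin x:ℝ):ℂ)*I := by
  rw [mul_comm, Complex.exp_mul_I, Complex.ofReal_cos, Complex.ofReal_sin]

lemma hE (x : ℝ) : ((Real.sin x :ℝ):ℂ) - ((Real.cos x:ℝ):ℂ)*I = -I * Complex.exp (I*x) := by
  linear_combination I * hEuler x + ((Real.sin x:ℝ):ℂ) * Complex.I_sq

lemma hnormexp (x : ℝ) : ‖Complex.exp (I*x)‖ = 1 := by
  rw [mul_comm]; exact Complex.norm_exp_ofReal_mul_I x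

-- E1 : point identity
lemma E1 (β α s : ℝ) :
    Complex.exp (I*β) + ((2 * Real.cos α * s : ℝ) : ℂ) * Complex.exp (I*(β+π+α))
      = (1-(s:ℂ))*Complex.exp (I*β) - (s:ℂ)*Complex.exp (I*(β+2*α)) := by
  have h := Complex.exp_ne_zero (I*(α:ℂ))
  push_cast
  simp only [← Complex.ofReal_cos, ← Complex.ofReal_sin]
  rw [show I*((β:ℂ)+↑π+↑α) = I*↑β + (I*↑π + I*↑α) by ring,
      show I*((β:ℂ)+2*↑α) = I*↑β + (I*↑α + I*↑α) by ring]
  simp only [Complex.exp_add, hpiC]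
  linear_combination (-(s:ℂ) * Complex.exp (I*(β:ℂ)) * Complex.exp (I*(α:ℂ))) * hcosM α
    + (-(s:ℂ) * Complex.exp (I*(β:ℂ))) * (by
        rw [← Complex.exp_add]; simp : Complex.exp (I*(α:ℂ)) * Complex.exp (-(I*(α:ℂ))) = 1)

-- E2 : s-derivative identity
lemma E2 (β α : ℝ) :
    -Complex.exp (I*β) - Complex.exp (I*(β+2*α))
      = ((2*Real.cos α : ℝ):ℂ) * Complex.exp (I*(β+π+α)) := by
  push_cast
  simp only [← Complex.ofReal_cos, ← Complex.ofReal_sin]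
  rw [show I*((β:ℂ)+↑π+↑α) = I*↑β + (I*↑π + I*↑α) by ring,
      show I*((β:ℂ)+2*↑α) = I*↑β + (I*↑α + I*↑α) by ring]
  simp only [Complex.exp_add, hpiC]
  linear_combination (Complex.exp (I*(β:ℂ)) * Complex.exp (I*(α:ℂ))) * hcosM α
    + (Complex.exp (I*(β:ℂ))) * (by
        rw [← Complex.exp_add]; simp : Complex.exp (I*(α:ℂ)) * Complex.exp (-(I*(α:ℂ))) = 1)

-- E3 : the vector identity
lemma E3 (β α : ℝ) :
    ((2*Real.cos α : ℝ):ℂ) * (((Real.sin (β+π+α) :ℝ):ℂ) - ((Real.cos (β+π+α):ℝ):ℂ) * I)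
      + (-(2*I))*Complex.exp (I*(β+2*α))
      = (-2*(Real.sin α:ℝ):ℂ) * Complex.exp (I*(β+π+α)) := by
  rw [hE (β+π+α)]
  push_cast
  simp only [← Complex.ofReal_cos, ← Complex.ofReal_sin]
  rw [show I*((β:ℂ)+↑π+↑α) = I*↑β + (I*↑π + I*↑α) by ring,
      show I*((β:ℂ)+2*↑α) = I*↑β + (I*↑α + I*↑α) by ring]
  simp only [Complex.exp_add, hpiC]
  linear_combination (I * Complex.exp (I*(β:ℂ)) * Complex.exp (I*(α:ℂ))) * hcosM α
    + (I * Complex.exp (I*(β:ℂ)) * Complex.exp (I*(α:ℂ))) * hsinM α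
    + (-2*((Real.sin α:ℝ):ℂ) * Complex.exp (I*(β:ℂ)) * Complex.exp (I*(α:ℂ))) * Complex.I_sq

-- endpoint / cos-zero identity
lemma Ecos0 (β α : ℝ) (h : Real.cos α = 0) :
    Complex.exp (I*(β+2*α)) = -Complex.exp (I*β) := by
  push_cast
  rw [show I*((β:ℂ)+2*↑α) = I*↑β + I*↑(2*α) by push_cast; ring, Complex.exp_add,
      hEuler (2*α), Real.cos_two_mul, Real.sin_two_mul, h]
  push_cast
  ring

/-- For `f ∈ C_c^∞(D)` (compactly supported in the open unit disk), the transform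
`I_⊥f(β,α) = ∫₀^{2cos α} (X_⊥f)(e^{iβ} + t e^{i(β+π+α)}) dt`, where along the line with
direction `θ = β+π+α` one has `X_⊥f = sin θ ∂ₓf − cos θ ∂ᵧf`, satisfies
`∫_{−π/2}^{π/2} I_⊥f(β,α) dα = 0` for every `β`. -/
theorem integral_Iperp_eq_zero (f : ℂ → ℂ) (hf : ContDiff ℝ (⊤ : ℕ∞) f)
    (hc : HasCompactSupport f) (hsupp : tsupport f ⊆ Metric.ball (0 : ℂ) 1) (β : ℝ) :
    (∫ α in (-(π / 2))..(π / 2),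
        ∫ t in (0 : ℝ)..(2 * Real.cos α),
          ((Real.sin (β + π + α) : ℂ) *
              fderiv ℝ f
                (Complex.exp (Complex.I * β) +
                  (t : ℂ) * Complex.exp (Complex.I * (β + π + α))) 1 -
            (Real.cos (β + π + α) : ℂ) *
              fderiv ℝ f
                (Complex.exp (Complex.I * β) +
                  (t : ℂ) * Complex.exp (Complex.I * (β + π + α))) Complex.I)) = 0 := by
  -- support radius
  obtain ⟨r, hr0, hr1, hrK⟩ : ∃ r : ℝ, 0 ≤ r ∧ r < 1 ∧ ∀ z : ℂ, r ≤ ‖z‖ → z ∉ tsupport f := by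
    by_cases hne : (tsupport f).Nonempty
    · obtain ⟨z₀, hz₀K, hmax⟩ := hc.exists_isMaxOn hne continuous_norm.continuousOn
      have hz₀1 : ‖z₀‖ < 1 := by simpa [Metric.mem_ball] using hsupp hz₀K
      refine ⟨(‖z₀‖ + 1)/2, by positivity, by linarith, ?_⟩
      intro z hz hzK
      have h1 : ‖z‖ ≤ ‖z₀‖ := hmax hzK
      linarith
    · exact ⟨1/2, by norm_num, by norm_num, fun z _ hzK => hne ⟨z, hzK⟩⟩
  have hf0 : ∀ z : ℂ, r ≤ ‖z‖ → f z = 0 := fun z hz =>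
    image_eq_zero_of_notMem_tsupport (hrK z hz)
  have hd : Differentiable ℝ f := hf.differentiable (by simp)
  have hDf0 : ∀ z : ℂ, r ≤ ‖z‖ → fderiv ℝ f z = 0 := by
    intro z hz
    have hopen : (tsupport f)ᶜ ∈ nhds z := (isClosed_tsupport f).isOpen_compl.mem_nhds (hrK z hz)
    have heq : f =ᶠ[nhds z] fun _ => (0:ℂ) :=
      Filter.eventuallyEq_of_mem hopen fun y hy => image_eq_zero_of_notMem_tsupport hy
    rw [heq.fderiv_eq]
    exact fderiv_const_apply 0
  set δ : ℝ := (1 - r)/2 with hδdef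
  have hδ0 : 0 < δ := by rw [hδdef]; linarith
  have hδ1 : δ ≤ 1 := by rw [hδdef]; linarith
  have hrδ : r = 1 - 2*δ := by rw [hδdef]; ring
  -- the point on the chord
  set q : ℝ → ℝ → ℂ := fun a s => (1 - (s:ℂ)) * Complex.exp (I*β) - (s:ℂ) * Complex.exp (I*(β+2*a))
    with hqdef
  -- norm lower bound
  have hnorm_coe : ∀ x : ℝ, ‖(x:ℂ)‖ = |x| := fun x => by rw [Complex.norm_real, Real.norm_eq_abs]
  have hnormexp2 : ∀ a : ℝ, ‖Complex.exp (I*((β:ℂ)+2*(a:ℂ)))‖ = 1 := by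
    intro a
    rw [show I*((β:ℂ)+2*(a:ℂ)) = I*((β+2*a : ℝ):ℂ) by push_cast; ring]
    exact hnormexp _
  have hqlow : ∀ a s : ℝ, 0 ≤ s → 1 - 2*s ≤ ‖q a s‖ := by
    intro a s hs
    have h1 : ‖(1 - (s:ℂ)) * Complex.exp (I*β)‖ = |1 - s| := by
      rw [norm_mul, hnormexp, mul_one, show (1 - (s:ℂ)) = ((1-s:ℝ):ℂ) by push_cast; ring,
        hnorm_coe]
    have h2 : ‖(s:ℂ) * Complex.exp (I*(β+2*a))‖ = s := by
      rw [norm_mul, hnormexp2, mul_one, hnorm_coe, _root_.abs_of_nonneg hs]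
    calc 1 - 2*s ≤ |1-s| - s := by
          have := le_abs_self (1-s); linarith
      _ ≤ ‖q a s‖ := by
          rw [hqdef]
          simpa only [h1, h2] using norm_sub_norm_le ((1 - (s:ℂ)) * Complex.exp (I*β))
            ((s:ℂ) * Complex.exp (I*(β+2*a)))
  have hqsmall : ∀ a s : ℝ, 0 ≤ s → s ≤ δ → r ≤ ‖q a s‖ := by
    intro a s h0 h1
    have := hqlow a s h0
    rw [hrδ]; linarith
  have hq1 : ∀ a : ℝ, r ≤ ‖q a 1‖ := by
    intro a
    have : q a 1 = - Complex.exp (I*(β+2*a)) := by rw [hqdef]; push_cast; ring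
    rw [this, norm_neg, hnormexp2]
    exact hr1.le
  -- derivative of the exponential
  have hexpD : ∀ a : ℝ, HasDerivAt (fun x : ℝ => Complex.exp (I*(β+2*(x:ℂ))))
      (2*I*Complex.exp (I*(β+2*(a:ℂ)))) a := by
    intro a
    have h0 : HasDerivAt (fun z : ℂ => I*(β+2*z)) (I*2) (a:ℂ) := by
      simpa using (((hasDerivAt_id (a:ℂ)).const_mul (2:ℂ)).const_add (β:ℂ)).const_mul I
    have h1 := h0.cexp.comp_ofReal
    convert h1 using 1
    ring
  -- α-derivative of q
  have hqa : ∀ (s a : ℝ), HasDerivAt (fun x : ℝ => q x s)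
      (-(2*I)*(s:ℂ)*Complex.exp (I*(β+2*(a:ℂ)))) a := by
    intro s a
    have h1 := (hexpD a).const_mul (s:ℂ)
    have h2 := (hasDerivAt_const a ((1 - (s:ℂ)) * Complex.exp (I*(β:ℂ)))).sub h1
    exact h2.congr_deriv (by ring)
  -- s-derivative of q
  have hqs : ∀ (a s : ℝ), HasDerivAt (fun x : ℝ => q a x)
      (-Complex.exp (I*(β:ℂ)) - Complex.exp (I*(β+2*(a:ℂ)))) s := by
    intro a s
    have hsder : HasDerivAt (fun x:ℝ => (x:ℂ)) 1 s := by
      simpa using (hasDerivAt_id s).ofReal_comp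
    have h1 := ((hasDerivAt_const s (1:ℂ)).sub hsder).mul_const (Complex.exp (I*(β:ℂ)))
    have h2 := hsder.mul_const (Complex.exp (I*(β+2*(a:ℂ))))
    have h3 := h1.sub h2
    exact h3.congr_deriv (by ring)
  -- the function G
  set G : ℝ → ℝ → ℂ := fun a s => (fderiv ℝ f (q a s)) (-(2*I) * Complex.exp (I*(β+2*(a:ℂ))))
    with hGdef
  -- continuity facts
  have hqc : Continuous fun p : ℝ × ℝ => q p.1 p.2 := by
    rw [hqdef]
    fun_prop
  have hDc : Continuous (fderiv ℝ f) := hf.continuous_fderiv (by simp)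
  have hGc : Continuous fun p : ℝ × ℝ => G p.1 p.2 := by
    rw [hGdef]
    exact (hDc.comp hqc).clm_apply (by fun_prop)
  -- linearity helper
  have hlin : ∀ (L : ℂ →L[ℝ] ℂ) (c : ℝ) (v : ℂ), (c:ℂ) * L v = L ((c:ℂ)*v) := by
    intro L c v
    rw [← Complex.real_smul, ← Complex.real_smul, L.map_smul]
  have hpi2 : -(π/2) ≤ π/2 := by linarith [Real.pi_pos]
  -- endpoint : q a s = exp (I β) when cos a = 0
  have hqconst : ∀ a : ℝ, Real.cos a = 0 → ∀ s : ℝ, q a s = Complex.exp (I*(β:ℂ)) := by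
    intro a ha s
    rw [hqdef]
    simp only
    rw [Ecos0 β a ha]
    ring
  have hEnorm : r ≤ ‖Complex.exp (I*(β:ℂ))‖ := by rw [hnormexp]; exact hr1.le
  -- continuity of s ↦ q a s and a ↦ q a s, and of G slices
  have hqc1 : ∀ a : ℝ, Continuous fun s : ℝ => q a s :=
    fun a => hqc.comp (continuous_const.prodMk continuous_id)
  have hGc1 : ∀ s : ℝ, Continuous fun a : ℝ => G a s :=
    fun s => hGc.comp (continuous_id.prodMk continuous_const)
  -- FTC in s : tangential integral vanishes
  have htang : ∀ α : ℝ, (∫ s in δ..1,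
      (fderiv ℝ f (q α s)) (-Complex.exp (I*(β:ℂ)) - Complex.exp (I*(β+2*(α:ℂ))))) = 0 := by
    intro α
    have hder : ∀ s ∈ Set.uIcc δ 1, HasDerivAt (fun x : ℝ => f (q α x))
        ((fderiv ℝ f (q α s)) (-Complex.exp (I*(β:ℂ)) - Complex.exp (I*(β+2*(α:ℂ))))) s :=
      fun s _ => (hd (q α s)).hasFDerivAt.comp_hasDerivAt s (hqs α s)
    have hint : IntervalIntegrable (fun s => (fderiv ℝ f (q α s))
        (-Complex.exp (I*(β:ℂ)) - Complex.exp (I*(β+2*(α:ℂ))))) MeasureTheory.volume δ 1 :=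
      (((hDc.comp (hqc1 α)).clm_apply continuous_const)).intervalIntegrable δ 1
    rw [intervalIntegral.integral_eq_sub_of_hasDerivAt hder hint]
    rw [hf0 _ (hq1 α), hf0 _ (hqsmall α δ hδ0.le le_rfl)]
    ring
  -- Key step 1 : inner integral equals -∫ G
  have key1 : ∀ α ∈ Set.uIcc (-(π/2)) (π/2),
      (∫ t in (0:ℝ)..(2 * Real.cos α),
          ((Real.sin (β + π + α) : ℂ) *
              fderiv ℝ f (Complex.exp (Complex.I * β) +
                  (t : ℂ) * Complex.exp (Complex.I * (β + π + α))) 1 -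
            (Real.cos (β + π + α) : ℂ) *
              fderiv ℝ f (Complex.exp (Complex.I * β) +
                  (t : ℂ) * Complex.exp (Complex.I * (β + π + α))) Complex.I))
        = -∫ s in δ..1, G α s := by
    intro α hα
    rw [Set.uIcc_of_le hpi2] at hα
    by_cases hkz : Real.cos α = 0
    · -- degenerate chord
      have hG0 : ∀ s : ℝ, G α s = 0 := by
        intro s
        rw [hGdef]
        simp only
        rw [hqconst α hkz s, hDf0 _ hEnorm]
        simp
      rw [hkz]
      norm_num
      simp [hG0]
    · have hkpos : 0 < 2 * Real.cos α := by
        have := Real.cos_nonneg_of_mem_Icc ⟨hα.1, hα.2⟩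
        rcases lt_or_eq_of_le this with h | h
        · linarith
        · exact absurd h.symm hkz
      -- change of variables
      have hsub := intervalIntegral.integral_comp_mul_left
        (a := (0:ℝ)) (b := (1:ℝ)) (c := 2 * Real.cos α)
        (fun t : ℝ => ((Real.sin (β + π + α) : ℂ) *
              fderiv ℝ f (Complex.exp (Complex.I * β) +
                  (t : ℂ) * Complex.exp (Complex.I * (β + π + α))) 1 -
            (Real.cos (β + π + α) : ℂ) *
              fderiv ℝ f (Complex.exp (Complex.I * β) +
                  (t : ℂ) * Complex.exp (Complex.I * (β + π + α))) Complex.I)) (ne_of_gt hkpos)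
      rw [mul_zero, mul_one] at hsub
      have hA : (∫ t in (0:ℝ)..(2 * Real.cos α),
          ((Real.sin (β + π + α) : ℂ) *
              fderiv ℝ f (Complex.exp (Complex.I * β) +
                  (t : ℂ) * Complex.exp (Complex.I * (β + π + α))) 1 -
            (Real.cos (β + π + α) : ℂ) *
              fderiv ℝ f (Complex.exp (Complex.I * β) +
                  (t : ℂ) * Complex.exp (Complex.I * (β + π + α))) Complex.I))
          = (2 * Real.cos α) • ∫ s in (0:ℝ)..1,
          ((Real.sin (β + π + α) : ℂ) *
              fderiv ℝ f (q α s) 1 -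
            (Real.cos (β + π + α) : ℂ) *
              fderiv ℝ f (q α s) Complex.I) := by
        have hpoint : ∀ s : ℝ, Complex.exp (Complex.I * β) +
            ((2 * Real.cos α * s : ℝ) : ℂ) * Complex.exp (Complex.I * (β + π + α)) = q α s := by
          intro s
          rw [hqdef]
          exact E1 β α s
        simp only [← hpoint]
        rw [hsub, smul_inv_smul₀ (ne_of_gt hkpos)]
      rw [hA]
      -- split off [0, δ] where everything vanishes
      have hΨc : Continuous fun s : ℝ => ((Real.sin (β + π + α) : ℂ) *
              fderiv ℝ f (q α s) 1 -
            (Real.cos (β + π + α) : ℂ) *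
              fderiv ℝ f (q α s) Complex.I) := by
        apply Continuous.sub
        · exact continuous_const.mul (((hDc.comp (hqc1 α)).clm_apply continuous_const))
        · exact continuous_const.mul (((hDc.comp (hqc1 α)).clm_apply continuous_const))
      have hsplit := intervalIntegral.integral_add_adjacent_intervals
        (a := (0:ℝ)) (b := δ) (c := 1) (μ := MeasureTheory.volume)
        (hΨc.intervalIntegrable 0 δ) (hΨc.intervalIntegrable δ 1)
      have hzero1 : (∫ s in (0:ℝ)..δ, ((Real.sin (β + π + α) : ℂ) *
              fderiv ℝ f (q α s) 1 -
            (Real.cos (β + π + α) : ℂ) *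
              fderiv ℝ f (q α s) Complex.I)) = 0 := by
        have heq : ∀ s ∈ Set.uIcc (0:ℝ) δ, ((Real.sin (β + π + α) : ℂ) *
              fderiv ℝ f (q α s) 1 -
            (Real.cos (β + π + α) : ℂ) *
              fderiv ℝ f (q α s) Complex.I) = (fun _ => (0:ℂ)) s := by
          intro s hs
          rw [Set.uIcc_of_le hδ0.le] at hs
          rw [hDf0 _ (hqsmall α s hs.1 hs.2)]
          simp
        rw [intervalIntegral.integral_congr heq, intervalIntegral.integral_zero]
      rw [← hsplit, hzero1, zero_add]
      -- now the main identity on [δ,1]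
      have hGi : IntervalIntegrable (fun s => G α s) MeasureTheory.volume δ 1 :=
        (hGc.comp (continuous_const.prodMk continuous_id)).intervalIntegrable δ 1
      have hΨi : IntervalIntegrable (fun s : ℝ => ((Real.sin (β + π + α) : ℂ) *
              fderiv ℝ f (q α s) 1 -
            (Real.cos (β + π + α) : ℂ) *
              fderiv ℝ f (q α s) Complex.I)) MeasureTheory.volume δ 1 :=
        hΨc.intervalIntegrable δ 1
      have hcomb : (∫ s in δ..1, ((2 * Real.cos α : ℝ) •
            ((Real.sin (β + π + α) : ℂ) * fderiv ℝ f (q α s) 1 -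
             (Real.cos (β + π + α) : ℂ) * fderiv ℝ f (q α s) Complex.I) + G α s))
          = ((-2 * Real.sin α / (2 * Real.cos α) : ℝ)) •
            ∫ s in δ..1, (fderiv ℝ f (q α s))
              (-Complex.exp (I*(β:ℂ)) - Complex.exp (I*(β+2*(α:ℂ)))) := by
        rw [← intervalIntegral.integral_smul]
        apply intervalIntegral.integral_congr
        intro s _
        simp only
        rw [hGdef]
        simp only
        set L := fderiv ℝ f (q α s) with hL
        have e3 := E3 β α
        have e2 := E2 β α
        calc (2 * Real.cos α : ℝ) • ((Real.sin (β + π + α) : ℂ) * L 1 -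
                (Real.cos (β + π + α) : ℂ) * L Complex.I)
              + L (-(2*I) * Complex.exp (I*(β+2*(α:ℂ))))
            = L (((2*Real.cos α : ℝ):ℂ) * (((Real.sin (β+π+α) :ℝ):ℂ) * 1 -
                ((Real.cos (β+π+α):ℝ):ℂ) * Complex.I)
                + (-(2*I)) * Complex.exp (I*(β+2*(α:ℂ)))) := by
              rw [L.map_add]
              congr 1
              rw [Complex.real_smul]
              rw [show ((2 * Real.cos α : ℝ):ℂ) * (((Real.sin (β+π+α) :ℝ):ℂ) * 1 -
                  ((Real.cos (β+π+α):ℝ):ℂ) * Complex.I)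
                = ((2 * Real.cos α * Real.sin (β+π+α) : ℝ):ℂ) * 1
                  - ((2 * Real.cos α * Real.cos (β+π+α) : ℝ):ℂ) * Complex.I by push_cast; ring]
              rw [L.map_sub, ← hlin L _ 1, ← hlin L _ Complex.I]
              push_cast
              ring
          _ = L (((-2 * Real.sin α / (2 * Real.cos α) : ℝ):ℂ) *
                (-Complex.exp (I*(β:ℂ)) - Complex.exp (I*(β+2*(α:ℂ))))) := by
              congr 1
              rw [mul_one]
              rw [e3, e2]
              have hcne : ((Real.cos α:ℝ):ℂ) ≠ 0 := by exact_mod_cast hkz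
              have hcne2 : Complex.cos (α:ℂ) ≠ 0 := by rw [← Complex.ofReal_cos]; exact hcne
              push_cast
              field_simp
          _ = ((-2 * Real.sin α / (2 * Real.cos α) : ℝ)) •
                (L (-Complex.exp (I*(β:ℂ)) - Complex.exp (I*(β+2*(α:ℂ))))) := by
              rw [← hlin]
              rw [Complex.real_smul]
      have h0 : (∫ s in δ..1, ((2 * Real.cos α : ℝ) •
            ((Real.sin (β + π + α) : ℂ) * fderiv ℝ f (q α s) 1 -
             (Real.cos (β + π + α) : ℂ) * fderiv ℝ f (q α s) Complex.I) + G α s)) = 0 := by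
        rw [hcomb, htang α, smul_zero]
      have h1 : (∫ s in δ..1, ((2 * Real.cos α : ℝ) •
            ((Real.sin (β + π + α) : ℂ) * fderiv ℝ f (q α s) 1 -
             (Real.cos (β + π + α) : ℂ) * fderiv ℝ f (q α s) Complex.I) + G α s))
          = (2 * Real.cos α) • (∫ s in δ..1, ((Real.sin (β + π + α) : ℂ) *
              fderiv ℝ f (q α s) 1 -
            (Real.cos (β + π + α) : ℂ) *
              fderiv ℝ f (q α s) Complex.I)) + (∫ s in δ..1, G α s) := by
        have hΨsi : IntervalIntegrable (fun s : ℝ => (2 * Real.cos α : ℝ) •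
            ((Real.sin (β + π + α) : ℂ) * fderiv ℝ f (q α s) 1 -
             (Real.cos (β + π + α) : ℂ) * fderiv ℝ f (q α s) Complex.I))
            MeasureTheory.volume δ 1 := hΨi.smul (2 * Real.cos α : ℝ)
        rw [intervalIntegral.integral_add hΨsi hGi, intervalIntegral.integral_smul]
      rw [h1] at h0
      exact eq_neg_of_add_eq_zero_left h0
  -- assemble
  rw [intervalIntegral.integral_congr key1, intervalIntegral.integral_neg, neg_eq_zero]
  -- Fubini
  have hswap : (∫ α in (-(π/2))..(π/2), ∫ s in δ..1, G α s)
      = ∫ s in δ..1, ∫ α in (-(π/2))..(π/2), G α s := by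
    rw [intervalIntegral.integral_of_le hpi2, intervalIntegral.integral_of_le hδ1]
    simp_rw [intervalIntegral.integral_of_le hδ1, intervalIntegral.integral_of_le hpi2]
    apply MeasureTheory.integral_integral_swap
    have hint : MeasureTheory.IntegrableOn (fun p : ℝ × ℝ => G p.1 p.2)
        (Set.Icc (-(π/2)) (π/2) ×ˢ Set.Icc δ 1) MeasureTheory.volume :=
      hGc.continuousOn.integrableOn_compact (isCompact_Icc.prod isCompact_Icc)
    have hint2 : MeasureTheory.IntegrableOn (fun p : ℝ × ℝ => G p.1 p.2)
        (Set.Ioc (-(π/2)) (π/2) ×ˢ Set.Ioc δ 1) MeasureTheory.volume :=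
      hint.mono_set (Set.prod_mono Set.Ioc_subset_Icc_self Set.Ioc_subset_Icc_self)
    rw [MeasureTheory.IntegrableOn, MeasureTheory.Measure.volume_eq_prod,
      ← MeasureTheory.Measure.prod_restrict] at hint2
    exact hint2
  rw [hswap]
  -- inner integral vanishes for each s
  have inner0 : ∀ s ∈ Set.uIcc δ 1, (∫ α in (-(π/2))..(π/2), G α s) = (fun _ => (0:ℂ)) s := by
    intro s hs
    rw [Set.uIcc_of_le hδ1] at hs
    have hs0 : (0:ℝ) < s := lt_of_lt_of_le hδ0 hs.1
    have hsne : ((s:ℝ):ℂ) ≠ 0 := by exact_mod_cast ne_of_gt hs0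
    have hder : ∀ α ∈ Set.uIcc (-(π/2)) (π/2), HasDerivAt
        (fun x : ℝ => ((s:ℝ):ℂ)⁻¹ * f (q x s)) (G α s) α := by
      intro α _
      have h := (hd (q α s)).hasFDerivAt.comp_hasDerivAt α (hqa s α)
      have h2 := h.const_mul (((s:ℝ):ℂ))⁻¹
      refine h2.congr_deriv ?_
      rw [hGdef]
      simp only
      rw [show (-(2*I)*((s:ℝ):ℂ)*Complex.exp (I*(β+2*(α:ℂ))))
          = ((s:ℝ):ℂ) * (-(2*I)*Complex.exp (I*(β+2*(α:ℂ)))) by ring, ← hlin]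
      field_simp
    have hint : IntervalIntegrable (fun α => G α s) MeasureTheory.volume (-(π/2)) (π/2) :=
      (hGc1 s).intervalIntegrable _ _
    rw [intervalIntegral.integral_eq_sub_of_hasDerivAt hder hint]
    rw [hqconst (π/2) Real.cos_pi_div_two s,
      hqconst (-(π/2)) (by rw [Real.cos_neg]; exact Real.cos_pi_div_two) s,
      hf0 _ hEnorm]
    simp
  rw [intervalIntegral.integral_congr inner0, intervalIntegral.integral_zero]
end

section
/- Let f be holomorphic on the closed unit disk with f(z) = Σ_{k≥0} a_k z^k, and I₀f(β,α) = ∫₀^{2cos α} f(e^{iβ}(1 − t e^{iα})) dt. Then I₀f(β,α) = Σ_{k≥0} ((−1)^k a_k/(k+1)) e^{ikβ}(e^{i(2k+1)α} + (−1)^k e^{−iα}). -/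
open Real Complex intervalIntegral

/-!
The chord `t ↦ e^{iβ}(1 - t e^{iα})`, `t ∈ [0, 2 cos α]`, stays in the closed unit disk, because
`|1 - t e^{iα}|² = 1 - t (2 cos α - t)`. The power series converges at `z = 1`, hence absolutely,
so dominated convergence with the constant bounds `|a_k|` lets us integrate it termwise along the
chord. Each term integrates in closed form, and the far endpoint is `1 - 2 cos α e^{iα} = -e^{2iα}`.
-/

theorem Complex.norm_one_sub_ofReal_mul_le_one {w : ℂ} (hw : ‖w‖ = 1) {t : ℝ}
    (ht : t ∈ Set.uIcc 0 (2 * w.re)) : ‖1 - t * w‖ ≤ 1 := by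
  have hsq : ‖1 - t * w‖ ^ 2 = 1 - t * (2 * w.re - t) := by
    rw [Complex.sq_norm, Complex.normSq_sub, Complex.normSq_mul, ← Complex.sq_norm w, hw]
    simp only [map_one, normSq_ofReal, one_pow, mul_one, map_mul, conj_ofReal, one_mul, mul_re,
      ofReal_re, conj_re, ofReal_im, conj_im, mul_neg, zero_mul, neg_zero, sub_zero]
    ring
  have hprod : 0 ≤ t * (2 * w.re - t) := by
    rcases Set.mem_uIcc.mp ht with ⟨h₀, h₁⟩ | ⟨h₀, h₁⟩ <;> nlinarith
  nlinarith [norm_nonneg (1 - t * w)]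

theorem Complex.one_sub_two_re_mul_eq_neg_sq {w : ℂ} (hw : ‖w‖ = 1) :
    1 - ((2 * w.re : ℝ) : ℂ) * w = -w ^ 2 := by
  have hconj : w * (starRingEnd ℂ) w = 1 := by
    rw [Complex.mul_conj, ← Complex.sq_norm, hw]
    simp
  rw [← Complex.add_conj]
  linear_combination -hconj

theorem integral_sub_ofReal_mul_pow {w : ℂ} (hw : w ≠ 0) (z : ℂ) (k : ℕ) (a b : ℝ) :
    ∫ t in a..b, (z - t * w) ^ k =
      ((z - a * w) ^ (k + 1) - (z - b * w) ^ (k + 1)) / ((k + 1) * w) := by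
  have hderiv : ∀ t : ℝ, HasDerivAt (fun s : ℝ => -(z - s * w) ^ (k + 1) / ((k + 1) * w))
      ((z - t * w) ^ k) t := by
    intro t
    have hlin : HasDerivAt (fun s : ℝ => z - s * w) (-w) t := by
      simpa using ((hasDerivAt_id t).ofReal_comp.mul_const w).const_sub z
    refine ((hlin.pow (k + 1)).neg.div_const _).congr_deriv ?_
    rw [Nat.add_sub_cancel]
    push_cast
    field_simp
  rw [integral_eq_sub_of_hasDerivAt (fun t _ => hderiv t)
    ((by fun_prop : Continuous _).intervalIntegrable _ _)]
  ring

theorem integral_one_sub_ofReal_mul_pow_chord {w : ℂ} (hw : ‖w‖ = 1) (k : ℕ) :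
    ∫ t in (0 : ℝ)..2 * w.re, (1 - t * w) ^ k = (w⁻¹ + (-1) ^ k * w ^ (2 * k + 1)) / (k + 1) := by
  have hw₀ : w ≠ 0 := norm_ne_zero_iff.mp (by simp [hw])
  rw [integral_sub_ofReal_mul_pow hw₀, one_sub_two_re_mul_eq_neg_sq hw, ofReal_zero, zero_mul,
    sub_zero, one_pow]
  field_simp
  ring

theorem hasSum_integral_of_hasSum_pow {f : ℂ → ℂ} {a : ℕ → ℂ}
    (hf : ∀ z : ℂ, ‖z‖ ≤ 1 → HasSum (fun k => a k * z ^ k) (f z)) {γ : ℝ → ℂ}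
    (hγ : Continuous γ) {t₀ t₁ : ℝ} (hγ_le : ∀ t ∈ Set.uIcc t₀ t₁, ‖γ t‖ ≤ 1) :
    HasSum (fun k => ∫ t in t₀..t₁, a k * γ t ^ k) (∫ t in t₀..t₁, f (γ t)) := by
  have ha : Summable fun k => ‖a k‖ :=
    summable_norm_iff.mpr (by simpa using (hf 1 (by simp)).summable)
  refine hasSum_integral_of_dominated_convergence (fun k _ => ‖a k‖)
    (fun k => by fun_prop) (fun k => ?_) (.of_forall fun _ _ => ha) intervalIntegrable_const
    (.of_forall fun t ht => hf _ (hγ_le t (Set.uIoc_subset_uIcc ht)))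
  refine .of_forall fun t ht => ?_
  rw [norm_mul, norm_pow]
  exact mul_le_of_le_one_right (norm_nonneg _)
    (pow_le_one₀ (norm_nonneg _) (hγ_le t (Set.uIoc_subset_uIcc ht)))

theorem I0_holomorphic_expansion_general (f : ℂ → ℂ) (a : ℕ → ℂ)
    (hf : ∀ z : ℂ, ‖z‖ ≤ 1 → HasSum (fun k : ℕ => a k * z ^ k) (f z)) (β α : ℝ) :
    HasSum
      (fun k : ℕ =>
        ((-1 : ℂ) ^ k * a k / ((k : ℂ) + 1)) * Complex.exp (Complex.I * (k : ℂ) * β) *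
          (Complex.exp (Complex.I * (2 * (k : ℂ) + 1) * α) +
            (-1 : ℂ) ^ k * Complex.exp (-Complex.I * α)))
      (∫ t in (0 : ℝ)..(2 * Real.cos α),
        f (Complex.exp (Complex.I * β) * (1 - (t : ℂ) * Complex.exp (Complex.I * α)))) := by
  set B := Complex.exp (Complex.I * β)
  set E := Complex.exp (Complex.I * α)
  have hB : ‖B‖ = 1 := by simp [B, Complex.norm_exp]
  have hE : ‖E‖ = 1 := by simp [E, Complex.norm_exp]
  have hL : 2 * Real.cos α = 2 * E.re := by simp [E, Complex.exp_re]
  rw [hL]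
  convert hasSum_integral_of_hasSum_pow hf (γ := fun t : ℝ => B * (1 - t * E)) (by fun_prop)
    (fun t ht => by simpa [hB] using norm_one_sub_ofReal_mul_le_one hE ht) using 2 with k
  simp_rw [mul_pow, ← mul_assoc]
  rw [integral_const_mul, integral_one_sub_ofReal_mul_pow_chord hE]
  have hBk : Complex.exp (Complex.I * k * β) = B ^ k := by
    rw [← Complex.exp_nat_mul]; ring_nf
  have hEk : Complex.exp (Complex.I * (2 * k + 1) * α) = E ^ (2 * k + 1) := by
    rw [← Complex.exp_nat_mul]; push_cast; ring_nf
  have hEinv : Complex.exp (-Complex.I * α) = E⁻¹ := by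
    rw [← Complex.exp_neg]; ring_nf
  have hsign : ((-1 : ℂ) ^ k) ^ 2 = 1 := by rw [← pow_mul, mul_comm, pow_mul]; simp
  rw [hBk, hEk, hEinv]
  linear_combination (a k * B ^ k * E⁻¹ / (k + 1)) * hsign

/-- If `f` is holomorphic on the closed unit disk with `f(z) = Σ_{k≥0} a_k z^k`, then in
fan-beam coordinates, `I₀f(β,α) = ∫₀^{2cos α} f(e^{iβ}(1 − t e^{iα})) dt` equals
`Σ_{k≥0} ((−1)^k a_k/(k+1)) e^{ikβ}(e^{i(2k+1)α} + (−1)^k e^{−iα})`. -/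
theorem I0_holomorphic_expansion (f : ℂ → ℂ) (a : ℕ → ℂ)
    (hf : ∀ z : ℂ, ‖z‖ ≤ 1 → HasSum (fun k : ℕ => a k * z ^ k) (f z)) (β α : ℝ)
    (hα : α ∈ Set.Ioo (-(π / 2)) (π / 2)) :
    HasSum
      (fun k : ℕ =>
        ((-1 : ℂ) ^ k * a k / ((k : ℂ) + 1)) * Complex.exp (Complex.I * (k : ℂ) * β) *
          (Complex.exp (Complex.I * (2 * (k : ℂ) + 1) * α) +
            (-1 : ℂ) ^ k * Complex.exp (-Complex.I * α)))
      (∫ t in (0 : ℝ)..(2 * Real.cos α),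
        f (Complex.exp (Complex.I * β) * (1 - (t : ℂ) * Complex.exp (Complex.I * α)))) :=
  I0_holomorphic_expansion_general f a hf β α
end

section
/- The operator C₊ = (1/2) A₋* H₊ A₋ acts diagonally on the basis vectors v_{p,q} = φ_{p,q} − (−1)^p φ_{p,p−q} of V₋ (indices p < 2q): C₊v_{p,q} = −i((sgn(2q) + sgn(2(p−q)))/2) v_{p,q}; in particular the eigenvalue is i if q<0 and p<q; −i if q>0 and p>q; i/2 if q=0 and p<0; −i/2 if q>0 and p=q; and 0 otherwise. -/
/-!
Each `φ_{p,m}` is a single angular harmonic `e^{2imα}`, so `H₊φ_{p,m} = -i sgn(2m) φ_{p,m}`.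
The scattering relation exchanges the two harmonics of `v_{p,q}`:
`φ_{p,q} ∘ S = (-1)^p φ_{p,p-q}`, because `S` shifts `β` by `π + 2α` and reflects `α ↦ π - α`.
Hence `A₋* H₊ A₋ v_{p,q}` collects both multipliers `-i sgn(2q)` and `-i sgn(2(p-q))` on each
of the two harmonics, and `C₊` acts by their average.
-/

open Real Complex MeasureTheory intervalIntegral

/-- `φ_{p,q}(β,α) = (1/(π√2)) e^{i(pβ+2qα)}`. -/
noncomputable def phiB (p q : ℤ) (β α : ℝ) : ℂ :=
  (1 / (π * Real.sqrt 2) : ℝ) * Complex.exp (Complex.I * (p * β + 2 * q * α))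

/-- `v_{p,q} = φ_{p,q} − (−1)^p φ_{p,p−q}`. -/
noncomputable def vB (p q : ℤ) (β α : ℝ) : ℂ :=
  phiB p q β α - (-1 : ℂ) ^ p * phiB p (p - q) β α

/-- `k`-th fiberwise Fourier coefficient in the angular variable `α ∈ S¹`. -/
noncomputable def fCoeff (w : ℝ → ℝ → ℂ) (β : ℝ) (k : ℤ) : ℂ :=
  (1 / (2 * π) : ℝ) * ∫ t in (0 : ℝ)..(2 * π), w β t * Complex.exp (-Complex.I * k * t)

/-- The fiberwise Hilbert transform restricted to even angular harmonics:
`e^{ikα} ↦ −i sgn(k) e^{ikα}` for even `k`, and `0` on odd harmonics. -/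
noncomputable def Hplus (w : ℝ → ℝ → ℂ) (β α : ℝ) : ℂ :=
  ∑' k : ℤ,
    if Even k then
      -Complex.I * (Int.sign k : ℂ) * fCoeff w β k * Complex.exp (Complex.I * k * α)
    else 0

/-- `C₊ = (1/2) A₋* H₊ A₋`: on `V₋`, the odd extension `A₋` with respect to the scattering
relation `S(β,α) = (β+π+2α, π−α)` of a `V₋` trigonometric expression is the same global
formula, and `A₋*g(β,α) = g(β,α) − g(S(β,α))`. -/
noncomputable def Cplus (w : ℝ → ℝ → ℂ) (β α : ℝ) : ℂ :=
  (1 / 2 : ℂ) * (Hplus w β α - Hplus w (β + π + 2 * α) (π - α))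

lemma integral_exp_int_mul_I (n : ℤ) :
    ∫ t in (0 : ℝ)..2 * π, cexp (I * n * t) = if n = 0 then ((2 * π : ℝ) : ℂ) else 0 := by
  rcases eq_or_ne n 0 with rfl | hn
  · simp
  · have hperiod : cexp (I * n * (2 * π : ℝ)) = 1 := by
      rw [show I * n * ((2 * π : ℝ) : ℂ) = n * (2 * π * I) by push_cast; ring]
      exact exp_int_mul_two_pi_mul_I n
    rw [if_neg hn, integral_exp_mul_complex (mul_ne_zero I_ne_zero (Int.cast_ne_zero.mpr hn)),
      hperiod]
    simp

lemma phiB_eq_mul_exp (p m : ℤ) (β α : ℝ) :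
    phiB p m β α = (1 / (π * √2) : ℝ) * cexp (I * p * β) * cexp (I * (2 * m : ℤ) * α) := by
  rw [phiB, mul_assoc _ (cexp _), ← Complex.exp_add]
  push_cast
  ring_nf

lemma continuous_phiB (p m : ℤ) (β : ℝ) : Continuous (phiB p m β) := by
  unfold phiB
  fun_prop

lemma fCoeff_phiB (p m : ℤ) (β : ℝ) (k : ℤ) :
    fCoeff (phiB p m) β k = if k = 2 * m then (1 / (π * √2) : ℝ) * cexp (I * p * β) else 0 := by
  have hintegrand : ∀ t : ℝ, phiB p m β t * cexp (-I * k * t)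
      = (1 / (π * √2) : ℝ) * cexp (I * p * β) * cexp (I * (2 * m - k : ℤ) * t) := by
    intro t
    rw [phiB_eq_mul_exp, mul_assoc _ (cexp _), ← Complex.exp_add]
    push_cast
    ring_nf
  rw [fCoeff, integral_congr fun t _ => hintegrand t, intervalIntegral.integral_const_mul,
    integral_exp_int_mul_I]
  by_cases hk : k = 2 * m
  · have hπ : (π : ℂ) ≠ 0 := ofReal_ne_zero.mpr pi_ne_zero
    rw [if_pos (by omega), if_pos hk]
    push_cast
    field_simp
  · rw [if_neg (by omega), if_neg hk]
    simp

lemma fCoeff_sub_const_mul (w₁ w₂ : ℝ → ℝ → ℂ) (c : ℂ) (β : ℝ) (k : ℤ)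
    (h₁ : Continuous (w₁ β)) (h₂ : Continuous (w₂ β)) :
    fCoeff (fun b a => w₁ b a - c * w₂ b a) β k = fCoeff w₁ β k - c * fCoeff w₂ β k := by
  have hexp : Continuous fun t : ℝ => cexp (-I * k * t) := by fun_prop
  have i₁ : IntervalIntegrable (fun t => w₁ β t * cexp (-I * k * t)) volume 0 (2 * π) :=
    (h₁.mul hexp).intervalIntegrable _ _
  have i₂ : IntervalIntegrable (fun t => c * (w₂ β t * cexp (-I * k * t))) volume 0 (2 * π) :=
    (continuous_const.mul (h₂.mul hexp)).intervalIntegrable _ _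
  simp only [fCoeff, sub_mul, mul_assoc c]
  rw [integral_sub i₁ i₂, intervalIntegral.integral_const_mul]
  ring

noncomputable def hplusTerm (w : ℝ → ℝ → ℂ) (β α : ℝ) (k : ℤ) : ℂ :=
  if Even k then -I * (Int.sign k : ℂ) * fCoeff w β k * cexp (I * k * α) else 0

lemma Hplus_eq_tsum_hplusTerm (w : ℝ → ℝ → ℂ) (β α : ℝ) :
    Hplus w β α = ∑' k, hplusTerm w β α k := rfl

lemma hasSum_hplusTerm_phiB (p m : ℤ) (β α : ℝ) :
    HasSum (hplusTerm (phiB p m) β α) (-I * (Int.sign (2 * m) : ℂ) * phiB p m β α) := by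
  convert hasSum_single (2 * m) fun k hk => ?_ using 1
  · rw [hplusTerm, if_pos (even_two_mul m), fCoeff_phiB, if_pos rfl, phiB_eq_mul_exp]
    ring
  · rw [hplusTerm, fCoeff_phiB, if_neg hk]
    simp

lemma hplusTerm_sub_const_mul (w₁ w₂ : ℝ → ℝ → ℂ) (c : ℂ) (β α : ℝ)
    (h₁ : Continuous (w₁ β)) (h₂ : Continuous (w₂ β)) :
    hplusTerm (fun b a => w₁ b a - c * w₂ b a) β α
      = fun k => hplusTerm w₁ β α k - c * hplusTerm w₂ β α k := by
  ext k
  simp only [hplusTerm, fCoeff_sub_const_mul w₁ w₂ c β k h₁ h₂]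
  split_ifs <;> ring

lemma Hplus_vB (p q : ℤ) (β α : ℝ) :
    Hplus (vB p q) β α = -I * (Int.sign (2 * q) : ℂ) * phiB p q β α
      - (-1) ^ p * (-I * (Int.sign (2 * (p - q)) : ℂ) * phiB p (p - q) β α) := by
  rw [Hplus_eq_tsum_hplusTerm, show vB p q = fun b a => phiB p q b a - (-1) ^ p * phiB p (p - q) b a
      from rfl, hplusTerm_sub_const_mul _ _ _ β α (continuous_phiB p q β)
      (continuous_phiB p (p - q) β)]
  exact ((hasSum_hplusTerm_phiB p q β α).sub
    ((hasSum_hplusTerm_phiB p (p - q) β α).mul_left _)).tsum_eq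

lemma phiB_scatter (p m : ℤ) (β α : ℝ) :
    phiB p m (β + π + 2 * α) (π - α) = (-1) ^ p * phiB p (p - m) β α := by
  have hsign : (-1 : ℂ) ^ p = cexp (p * (π * I)) := by rw [exp_int_mul, exp_pi_mul_I]
  have harg : I * (p * (β + π + 2 * α : ℝ) + 2 * m * (π - α : ℝ))
      = p * (π * I) + I * (p * β + 2 * (p - m : ℤ) * α) + m * (2 * π * I) := by
    push_cast; ring
  rw [phiB, phiB, hsign, harg, Complex.exp_add, Complex.exp_add, exp_int_mul_two_pi_mul_I]
  ring

lemma Cplus_vB (p q : ℤ) (β α : ℝ) :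
    Cplus (vB p q) β α
      = -I * (((Int.sign (2 * q) : ℂ) + (Int.sign (2 * (p - q)) : ℂ)) / 2) * vB p q β α := by
  have hscatter := phiB_scatter p (p - q) β α
  rw [sub_sub_cancel] at hscatter
  have hsq : ((-1 : ℂ) ^ p) * (-1) ^ p = 1 := by rw [← mul_zpow]; norm_num
  rw [Cplus, Hplus_vB, Hplus_vB, phiB_scatter, hscatter, vB]
  linear_combination (-(I * (Int.sign (2 * (p - q)) : ℂ) * phiB p q β α) / 2) * hsq

lemma signAverage_cases (p q : ℤ) (hpq : p < 2 * q) (v : ℂ) :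
    -I * (((Int.sign (2 * q) : ℂ) + (Int.sign (2 * (p - q)) : ℂ)) / 2) * v =
      if q < 0 ∧ p < q then I * v
      else if 0 < q ∧ q < p then -I * v
      else if q = 0 ∧ p < 0 then (I / 2) * v
      else if 0 < q ∧ p = q then (-I / 2) * v
      else 0 := by
  split_ifs with h₁ h₂ h₃ h₄
  · rw [Int.sign_eq_neg_one_of_neg (a := 2 * q) (by omega),
      Int.sign_eq_neg_one_of_neg (a := 2 * (p - q)) (by omega)]
    push_cast; ring
  · rw [Int.sign_eq_one_of_pos (a := 2 * q) (by omega),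
      Int.sign_eq_one_of_pos (a := 2 * (p - q)) (by omega)]
    push_cast; ring
  · rw [Int.sign_eq_neg_one_of_neg (a := 2 * (p - q)) (by omega), h₃.1, mul_zero, Int.sign_zero]
    push_cast; ring
  · rw [Int.sign_eq_one_of_pos (a := 2 * q) (by omega), h₄.2, sub_self, mul_zero, Int.sign_zero]
    push_cast; ring
  · rw [Int.sign_eq_one_of_pos (a := 2 * q) (by omega),
      Int.sign_eq_neg_one_of_neg (a := 2 * (p - q)) (by omega)]
    push_cast; ring

/-- The operator `C₊ = (1/2)A₋* H₊ A₋` acts diagonally on the basis vectors `v_{p,q}` of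
`V₋` (`p < 2q`): `C₊v_{p,q} = −i((sgn(2q)+sgn(2(p−q)))/2) v_{p,q}`; in particular the
eigenvalue is `i` if `q<0, p<q`; `−i` if `q>0, p>q`; `i/2` if `q=0, p<0`; `−i/2` if
`q>0, p=q`; and `0` otherwise. -/
theorem Cplus_diagonal (p q : ℤ) (hpq : p < 2 * q) (β α : ℝ) :
    (Cplus (fun b a => vB p q b a) β α =
        -Complex.I * (((Int.sign (2 * q) : ℂ) + (Int.sign (2 * (p - q)) : ℂ)) / 2) *
          vB p q β α) ∧
      Cplus (fun b a => vB p q b a) β α =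
        if q < 0 ∧ p < q then Complex.I * vB p q β α
        else if 0 < q ∧ q < p then -Complex.I * vB p q β α
        else if q = 0 ∧ p < 0 then (Complex.I / 2) * vB p q β α
        else if 0 < q ∧ p = q then (-Complex.I / 2) * vB p q β α
        else 0 :=
  ⟨Cplus_vB p q β α, (Cplus_vB p q β α).trans (signAverage_cases p q hpq _)⟩
end
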